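/- arXiv:2603.24362 — 2 statements merged into one kernel-verified Lean document; each statement's English description precedes it below -/
import Mathlib

section
/- Let 0 < λ ≤ Λ, set ω = Λ/λ and α = π/2, let γ > 0, and define u_Y(x,y,z) = γ·cos x − γ√ω·sin((y−α)/√ω) + cos z. Suppose 0 ≤ x ≤ α, 0 ≤ z ≤ α, (γ·cos x + cos z)/(γ√ω) ≤ 1, and α ≤ y ≤ α + √ω·arcsin((γ·cos x + cos z)/(γ√ω)). Then: (i) −M⁺_{λ,Λ}(Hess u_Y(x,y,z)) = λ·u_Y(x,y,z); (ii) u_Y(x,y,z) > 0 whenever y < α + √ω·arcsin((γ·cos x + cos z)/(γ√ω)); and (iii) u_Y(x,y,z) = 0 when y = α + √ω·arcsin((γ·cos x + cos z)/(γ√ω)). -/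
/-- The Pucci maximal operator `M⁺_{λ,Λ}` of a symmetric matrix:
`Σᵢ (Λ·max(eᵢ,0) + λ·min(eᵢ,0))` over the eigenvalues `eᵢ` (with multiplicity). -/
noncomputable def pucci (lam Lam : ℝ) {n : Type*} [Fintype n] [DecidableEq n]
    (A : Matrix n n ℝ) : ℝ :=
  if h : A.IsHermitian then
    ∑ i, (Lam * max (h.eigenvalues i) 0 + lam * min (h.eigenvalues i) 0)
  else 0

/-- Partial derivative in the first variable. -/
noncomputable def d1 (u : ℝ → ℝ → ℝ → ℝ) : ℝ → ℝ → ℝ → ℝ :=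
  fun x y z => deriv (fun t => u t y z) x

/-- Partial derivative in the second variable. -/
noncomputable def d2 (u : ℝ → ℝ → ℝ → ℝ) : ℝ → ℝ → ℝ → ℝ :=
  fun x y z => deriv (fun t => u x t z) y

/-- Partial derivative in the third variable. -/
noncomputable def d3 (u : ℝ → ℝ → ℝ → ℝ) : ℝ → ℝ → ℝ → ℝ :=
  fun x y z => deriv (fun t => u x y t) z

/-- The Hessian matrix of second partial derivatives of `u : ℝ³ → ℝ`. -/
noncomputable def hess3 (u : ℝ → ℝ → ℝ → ℝ) (x y z : ℝ) : Matrix (Fin 3) (Fin 3) ℝ :=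
  !![d1 (d1 u) x y z, d2 (d1 u) x y z, d3 (d1 u) x y z;
     d1 (d2 u) x y z, d2 (d2 u) x y z, d3 (d2 u) x y z;
     d1 (d3 u) x y z, d2 (d3 u) x y z, d3 (d3 u) x y z]

/-! ### Auxiliary lemmas -/

open Polynomial in
lemma my_charpoly_conj {n : Type*} [Fintype n] [DecidableEq n]
    (P Q A : Matrix n n ℝ) (hPQ : P * Q = 1) :
    (P * A * Q).charpoly = A.charpoly := by
  set f : Matrix n n ℝ →+* Matrix n n ℝ[X] := (C : ℝ →+* ℝ[X]).mapMatrix with hf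
  have hm : f P * f Q = 1 := by rw [← map_mul, hPQ, map_one]
  have key : (P * A * Q).charmatrix = f P * A.charmatrix * f Q := by
    unfold Matrix.charmatrix
    rw [map_mul, map_mul, Matrix.mul_sub, Matrix.sub_mul]
    congr 1
    have c := (Matrix.scalar_commute (n := n) (X : ℝ[X]) (fun r' => mul_comm _ _) (f P)).symm
    symm
    calc f P * Matrix.scalar n (X : ℝ[X]) * f Q
        = Matrix.scalar n (X : ℝ[X]) * f P * f Q := by rw [c.eq]
      _ = Matrix.scalar n (X : ℝ[X]) := by rw [mul_assoc, hm, mul_one]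
  rw [Matrix.charpoly, Matrix.charpoly, key, Matrix.det_mul, Matrix.det_mul]
  have : (f P).det * (f Q).det = 1 := by rw [← Matrix.det_mul, hm, Matrix.det_one]
  calc (f P).det * A.charmatrix.det * (f Q).det
      = ((f P).det * (f Q).det) * A.charmatrix.det := by ring
    _ = A.charmatrix.det := by rw [this, one_mul]

open Polynomial in
lemma my_charpoly_diag {n : Type*} [Fintype n] [DecidableEq n] [LinearOrder n]
    (d : n → ℝ) : (Matrix.diagonal d).charpoly = ∏ i, (X - C (d i)) := by
  rw [Matrix.charpoly_of_upperTriangular _ (Matrix.blockTriangular_diagonal d)]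
  simp

open Polynomial in
lemma my_eig_multiset {n : Type*} [Fintype n] [DecidableEq n] [LinearOrder n]
    (d : n → ℝ) (h : (Matrix.diagonal d).IsHermitian) :
    Multiset.map h.eigenvalues Finset.univ.val = Multiset.map d Finset.univ.val := by
  have hU := h.spectral_theorem
  rw [RCLike.ofReal_real_eq_id] at hU
  have hUQ : (h.eigenvectorUnitary : Matrix n n ℝ) * star (h.eigenvectorUnitary : Matrix n n ℝ)
      = 1 := Matrix.mem_unitaryGroup_iff.mp h.eigenvectorUnitary.2
  have hcp : (Matrix.diagonal d).charpoly = (Matrix.diagonal h.eigenvalues).charpoly := by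
    conv_lhs => rw [hU]
    have := my_charpoly_conj (h.eigenvectorUnitary : Matrix n n ℝ)
      (star (h.eigenvectorUnitary : Matrix n n ℝ)) (Matrix.diagonal h.eigenvalues) hUQ
    simpa using this
  rw [my_charpoly_diag, my_charpoly_diag] at hcp
  have key : ∀ (v : n → ℝ), (∏ i, (X - C (v i))) =
      ((Finset.univ.val.map v).map (fun a => X - C a)).prod := by
    intro v
    rw [Multiset.map_map]
    rfl
  rw [key d, key h.eigenvalues] at hcp
  have := congrArg Polynomial.roots hcp
  rw [roots_multiset_prod_X_sub_C, roots_multiset_prod_X_sub_C] at this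
  exact this.symm

lemma my_sum_eig {n : Type*} [Fintype n] [DecidableEq n] [LinearOrder n]
    (d : n → ℝ) (h : (Matrix.diagonal d).IsHermitian) (g : ℝ → ℝ) :
    ∑ i, g (h.eigenvalues i) = ∑ i, g (d i) := by
  have hm := my_eig_multiset d h
  have e1 : ∑ i, g (h.eigenvalues i) = ((Finset.univ.val.map h.eigenvalues).map g).sum := by
    rw [Multiset.map_map]; rfl
  have e2 : ∑ i, g (d i) = ((Finset.univ.val.map d).map g).sum := by
    rw [Multiset.map_map]; rfl
  rw [e1, e2, hm]

lemma my_pucci_diagonal (lam Lam : ℝ) {n : Type*} [Fintype n] [DecidableEq n] [LinearOrder n]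
    (d : n → ℝ) :
    pucci lam Lam (Matrix.diagonal d) = ∑ i, (Lam * max (d i) 0 + lam * min (d i) 0) := by
  rw [pucci, dif_pos (Matrix.isHermitian_diagonal d)]
  exact my_sum_eig d _ (fun e => Lam * max e 0 + lam * min e 0)

noncomputable def uY (γ ω α : ℝ) : ℝ → ℝ → ℝ → ℝ := fun x y z =>
  γ * Real.cos x - γ * Real.sqrt ω * Real.sin ((y - α) / Real.sqrt ω) + Real.cos z

lemma d1_uY (γ ω α : ℝ) : d1 (uY γ ω α) = fun x _ _ => -(γ * Real.sin x) := by
  funext x y z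
  have h : HasDerivAt (fun t => uY γ ω α t y z) (γ * -Real.sin x) x :=
    (((Real.hasDerivAt_cos x).const_mul γ).sub_const _).add_const _
  simp only [d1, h.deriv]; ring

lemma d3_uY (γ ω α : ℝ) : d3 (uY γ ω α) = fun _ _ z => -Real.sin z := by
  funext x y z
  have h : HasDerivAt (fun t => uY γ ω α x y t) (-Real.sin z) z :=
    (Real.hasDerivAt_cos z).const_add _
  simp only [d3, h.deriv]

lemma inner_deriv (ω α : ℝ) (y : ℝ) :
    HasDerivAt (fun t => (t - α) / Real.sqrt ω) (1 / Real.sqrt ω) y := by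
  simpa using ((hasDerivAt_id y).sub_const α).div_const (Real.sqrt ω)

lemma d2_uY (γ ω α : ℝ) (hs : Real.sqrt ω ≠ 0) :
    d2 (uY γ ω α) = fun _ y _ => -(γ * Real.cos ((y - α) / Real.sqrt ω)) := by
  funext x y z
  have hsin : HasDerivAt (fun t => Real.sin ((t - α) / Real.sqrt ω))
      (Real.cos ((y - α) / Real.sqrt ω) * (1 / Real.sqrt ω)) y :=
    (Real.hasDerivAt_sin _).comp y (inner_deriv ω α y)
  have h : HasDerivAt (fun t => uY γ ω α x t z)
      (-(γ * Real.sqrt ω * (Real.cos ((y - α) / Real.sqrt ω) * (1 / Real.sqrt ω)))) y :=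
    ((hsin.const_mul (γ * Real.sqrt ω)).const_sub _).add_const _
  simp only [d2, h.deriv]
  field_simp

lemma d22_uY (γ ω α : ℝ) (hs : Real.sqrt ω ≠ 0) (x y z : ℝ) :
    d2 (d2 (uY γ ω α)) x y z = γ / Real.sqrt ω * Real.sin ((y - α) / Real.sqrt ω) := by
  rw [d2_uY γ ω α hs]
  have hcos : HasDerivAt (fun t => Real.cos ((t - α) / Real.sqrt ω))
      (-Real.sin ((y - α) / Real.sqrt ω) * (1 / Real.sqrt ω)) y :=
    (Real.hasDerivAt_cos _).comp y (inner_deriv ω α y)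
  have h : HasDerivAt (fun t => -(γ * Real.cos ((t - α) / Real.sqrt ω)))
      (-(γ * (-Real.sin ((y - α) / Real.sqrt ω) * (1 / Real.sqrt ω)))) y :=
    (hcos.const_mul γ).neg
  simp only [d2, h.deriv]
  field_simp

lemma hess_uY (γ ω α : ℝ) (hs : Real.sqrt ω ≠ 0) (x y z : ℝ) :
    hess3 (uY γ ω α) x y z = Matrix.diagonal
      ![-(γ * Real.cos x), γ / Real.sqrt ω * Real.sin ((y - α) / Real.sqrt ω),
        -Real.cos z] := by
  have h11 : d1 (d1 (uY γ ω α)) x y z = -(γ * Real.cos x) := by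
    rw [d1_uY]
    have h : HasDerivAt (fun t => -(γ * Real.sin t)) (-(γ * Real.cos x)) x :=
      ((Real.hasDerivAt_sin x).const_mul γ).neg
    simp only [d1, h.deriv]
  have h33 : d3 (d3 (uY γ ω α)) x y z = -Real.cos z := by
    rw [d3_uY]
    have h : HasDerivAt (fun t => -Real.sin t) (-Real.cos z) z := (Real.hasDerivAt_sin z).neg
    simp only [d3, h.deriv]
  have h22 := d22_uY γ ω α hs x y z
  have h12 : d2 (d1 (uY γ ω α)) x y z = 0 := by rw [d1_uY]; simp [d2]
  have h13 : d3 (d1 (uY γ ω α)) x y z = 0 := by rw [d1_uY]; simp [d3]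
  have h21 : d1 (d2 (uY γ ω α)) x y z = 0 := by rw [d2_uY γ ω α hs]; simp [d1]
  have h23 : d3 (d2 (uY γ ω α)) x y z = 0 := by rw [d2_uY γ ω α hs]; simp [d3]
  have h31 : d1 (d3 (uY γ ω α)) x y z = 0 := by rw [d3_uY]; simp [d1]
  have h32 : d2 (d3 (uY γ ω α)) x y z = 0 := by rw [d3_uY]; simp [d2]
  ext i j
  fin_cases i <;> fin_cases j <;>
    simp [hess3, Matrix.diagonal, Matrix.vecHead, Matrix.vecTail,
      h11, h12, h13, h21, h22, h23, h31, h32, h33]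

/-- The Y-cap: `u_Y(x,y,z) = γ cos x − γ√ω·sin((y−α)/√ω) + cos z` satisfies
`−M⁺(Hess u_Y) = λ·u_Y` on the cap, is positive inside and vanishes on the
outer boundary. -/
theorem y_cap_eigen (lam Lam γ : ℝ) (hlam : 0 < lam) (hLam : lam ≤ Lam) (hγ : 0 < γ)
    (ω α : ℝ) (hω : ω = Lam / lam) (hα : α = Real.pi / 2) (x y z : ℝ)
    (hx : 0 ≤ x ∧ x ≤ α) (hz : 0 ≤ z ∧ z ≤ α)
    (harg : (γ * Real.cos x + Real.cos z) / (γ * Real.sqrt ω) ≤ 1)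
    (hy : α ≤ y ∧
      y ≤ α + Real.sqrt ω *
        Real.arcsin ((γ * Real.cos x + Real.cos z) / (γ * Real.sqrt ω))) :
    (-pucci lam Lam
        (hess3 (fun x y z =>
          γ * Real.cos x - γ * Real.sqrt ω * Real.sin ((y - α) / Real.sqrt ω) +
            Real.cos z) x y z) =
      lam * (γ * Real.cos x - γ * Real.sqrt ω * Real.sin ((y - α) / Real.sqrt ω) +
        Real.cos z)) ∧
    (y < α + Real.sqrt ω *
        Real.arcsin ((γ * Real.cos x + Real.cos z) / (γ * Real.sqrt ω)) →
      0 < γ * Real.cos x - γ * Real.sqrt ω * Real.sin ((y - α) / Real.sqrt ω) +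
        Real.cos z) ∧
    (y = α + Real.sqrt ω *
        Real.arcsin ((γ * Real.cos x + Real.cos z) / (γ * Real.sqrt ω)) →
      γ * Real.cos x - γ * Real.sqrt ω * Real.sin ((y - α) / Real.sqrt ω) +
        Real.cos z = 0) := by
  obtain ⟨hx0, hx1⟩ := hx
  obtain ⟨hz0, hz1⟩ := hz
  obtain ⟨hy0, hy1⟩ := hy
  have hω0 : 0 < ω := by
    rw [hω]; exact div_pos (lt_of_lt_of_le hlam hLam) hlam
  have hs0 : 0 < Real.sqrt ω := Real.sqrt_pos.mpr hω0
  have hs : Real.sqrt ω ≠ 0 := ne_of_gt hs0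
  have hπ := Real.pi_pos
  have hcx : 0 ≤ Real.cos x :=
    Real.cos_nonneg_of_mem_Icc ⟨by linarith, by linarith⟩
  have hcz : 0 ≤ Real.cos z :=
    Real.cos_nonneg_of_mem_Icc ⟨by linarith, by linarith⟩
  have hq0 : (0:ℝ) ≤ (γ * Real.cos x + Real.cos z) / (γ * Real.sqrt ω) :=
    div_nonneg (by positivity) (by positivity)
  have hθ0 : 0 ≤ (y - α) / Real.sqrt ω := div_nonneg (by linarith) hs0.le
  have hθle : (y - α) / Real.sqrt ω ≤
      Real.arcsin ((γ * Real.cos x + Real.cos z) / (γ * Real.sqrt ω)) := by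
    rw [div_le_iff₀ hs0, mul_comm]
    linarith
  have hθπ : (y - α) / Real.sqrt ω ≤ Real.pi / 2 :=
    hθle.trans (Real.arcsin_le_pi_div_two _)
  have hsinθ : 0 ≤ Real.sin ((y - α) / Real.sqrt ω) :=
    Real.sin_nonneg_of_nonneg_of_le_pi hθ0 (by linarith)
  have hqs : γ * Real.sqrt ω * ((γ * Real.cos x + Real.cos z) / (γ * Real.sqrt ω)) =
      γ * Real.cos x + Real.cos z := by
    field_simp
  refine ⟨?_, ?_, ?_⟩
  · show -pucci lam Lam (hess3 (uY γ ω α) x y z) = _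
    rw [hess_uY γ ω α hs x y z, my_pucci_diagonal, Fin.sum_univ_three]
    have he1 : -(γ * Real.cos x) ≤ 0 := by nlinarith
    have he2 : 0 ≤ γ / Real.sqrt ω * Real.sin ((y - α) / Real.sqrt ω) :=
      mul_nonneg (div_nonneg hγ.le hs0.le) hsinθ
    have he3 : -Real.cos z ≤ 0 := by linarith
    simp only [Matrix.cons_val_zero, Matrix.cons_val_one, Matrix.head_cons,
      Matrix.cons_val_two, Matrix.tail_cons]
    rw [max_eq_right he1, min_eq_left he1, max_eq_left he2, min_eq_right he2,
      max_eq_right he3, min_eq_left he3]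
    have hss : Real.sqrt ω * Real.sqrt ω = ω := Real.mul_self_sqrt hω0.le
    have hΛ : lam * (Real.sqrt ω * Real.sqrt ω) = Lam := by
      rw [hss, hω]; field_simp
    have hkey : Lam * (γ / Real.sqrt ω * Real.sin ((y - α) / Real.sqrt ω)) =
        lam * (γ * Real.sqrt ω * Real.sin ((y - α) / Real.sqrt ω)) := by
      have h2 : Lam = lam * ω := by rw [hω]; field_simp
      rw [h2]
      field_simp
      linear_combination (-Real.sin ((y - α) / Real.sqrt ω)) * hss
    rw [hkey]
    ring
  · intro hlt
    have hθlt : (y - α) / Real.sqrt ω <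
        Real.arcsin ((γ * Real.cos x + Real.cos z) / (γ * Real.sqrt ω)) := by
      rw [div_lt_iff₀ hs0, mul_comm]
      linarith
    have hmono := Real.strictMonoOn_sin
      (a := (y - α) / Real.sqrt ω)
      (b := Real.arcsin ((γ * Real.cos x + Real.cos z) / (γ * Real.sqrt ω)))
      ⟨by linarith, by linarith⟩ (Real.arcsin_mem_Icc _) hθlt
    rw [Real.sin_arcsin (by linarith) harg] at hmono
    nlinarith [mul_lt_mul_of_pos_left hmono (by positivity : (0:ℝ) < γ * Real.sqrt ω)]
  · intro heq
    have hθeq : (y - α) / Real.sqrt ω =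
        Real.arcsin ((γ * Real.cos x + Real.cos z) / (γ * Real.sqrt ω)) := by
      rw [heq]; field_simp; ring
    rw [hθeq, Real.sin_arcsin (by linarith) harg]
    linarith [hqs]
end

section
/- Let 0 < λ ≤ Λ, set ω = Λ/λ and α = π/2, let γ > 0, and define u_{YZ}(x,y,z) = γ·cos x − γ√ω·sin r − √ω·sin t, where r = (y−α)/√ω and t = (z−α)/√ω. Suppose 0 ≤ r ≤ π/2, 0 ≤ t ≤ π/2, √ω·sin r + (√ω/γ)·sin t ≤ 1, and 0 ≤ x ≤ arccos(√ω·sin r + (√ω/γ)·sin t). Then: (i) −M⁺_{λ,Λ}(Hess u_{YZ}(x,y,z)) = λ·u_{YZ}(x,y,z); (ii) u_{YZ}(x,y,z) > 0 whenever x < arccos(√ω·sin r + (√ω/γ)·sin t); and (iii) u_{YZ}(x,y,z) = 0 when x = arccos(√ω·sin r + (√ω/γ)·sin t). -/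
open Matrix Polynomial in
lemma charmatrix_diag {n : Type*} [Fintype n] [DecidableEq n] (d : n → ℝ) :
    charmatrix (Matrix.diagonal d) = Matrix.diagonal (fun i => X - C (d i)) := by
  ext i j
  by_cases h : i = j
  · subst h; simp [charmatrix_apply_eq]
  · simp [charmatrix_apply_ne _ _ _ h, Matrix.diagonal_apply_ne _ h]
open Matrix Polynomial in
lemma charpoly_diag {n : Type*} [Fintype n] [DecidableEq n] (d : n → ℝ) :
    (Matrix.diagonal d).charpoly = ∏ i, (X - C (d i)) := by
  rw [Matrix.charpoly, charmatrix_diag, Matrix.det_diagonal]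

open Matrix Polynomial in
lemma charpoly_herm {n : Type*} [Fintype n] [DecidableEq n]
    {A : Matrix n n ℝ} (hA : A.IsHermitian) :
    A.charpoly = (Matrix.diagonal hA.eigenvalues).charpoly := by
  set U : Matrix n n ℝ := (hA.eigenvectorUnitary : Matrix n n ℝ) with hUdef
  have hU1 : U * star U = 1 := (Matrix.mem_unitaryGroup_iff).mp hA.eigenvectorUnitary.2
  have hspec : A = U * Matrix.diagonal hA.eigenvalues * star U := by
    have := hA.spectral_theorem
    simpa [RCLike.ofReal_real_eq_id] using this
  set D := Matrix.diagonal hA.eigenvalues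
  have hcm : charmatrix (U * D * star U) =
      (C : ℝ →+* ℝ[X]).mapMatrix U * charmatrix D * (C : ℝ →+* ℝ[X]).mapMatrix (star U) := by
    have h1 : ((C : ℝ →+* ℝ[X]).mapMatrix U) * ((C : ℝ →+* ℝ[X]).mapMatrix (star U)) = 1 := by
      rw [← _root_.map_mul, hU1, _root_.map_one]
    unfold charmatrix
    rw [_root_.map_mul, _root_.map_mul]
    rw [mul_sub, sub_mul]
    congr 1
    rw [← Matrix.scalar_commute (X : ℝ[X]) (Commute.all X) ((C : ℝ →+* ℝ[X]).mapMatrix U), mul_assoc, h1, mul_one]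
  rw [hspec, Matrix.charpoly, Matrix.charpoly, hcm, Matrix.det_mul, Matrix.det_mul]
  have h1 : ((C : ℝ →+* ℝ[X]).mapMatrix U).det * ((C : ℝ →+* ℝ[X]).mapMatrix (star U)).det = 1 := by
    rw [← Matrix.det_mul, ← _root_.map_mul, hU1, _root_.map_one, Matrix.det_one]
  calc ((C : ℝ →+* ℝ[X]).mapMatrix U).det * (charmatrix D).det *
        ((C : ℝ →+* ℝ[X]).mapMatrix (star U)).det
      = (charmatrix D).det * (((C : ℝ →+* ℝ[X]).mapMatrix U).det *
        ((C : ℝ →+* ℝ[X]).mapMatrix (star U)).det) := by ring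
    _ = (charmatrix D).det := by rw [h1, mul_one]

open Matrix Polynomial in
lemma eig_multiset {n : Type*} [Fintype n] [DecidableEq n] (d : n → ℝ)
    (h : (Matrix.diagonal d).IsHermitian) :
    Finset.univ.val.map h.eigenvalues = Finset.univ.val.map d := by
  have h1 := charpoly_herm h
  rw [charpoly_diag d, charpoly_diag h.eigenvalues] at h1
  have h2 : ∀ (e : n → ℝ), (∏ i, (X - C (e i))) =
      ((Finset.univ.val.map e).map (fun a => X - C a)).prod := by
    intro e
    rw [Multiset.map_map, Finset.prod_eq_multiset_prod]
    rfl
  have := congrArg Polynomial.roots h1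
  rw [h2 d, h2 h.eigenvalues, Polynomial.roots_multiset_prod_X_sub_C,
    Polynomial.roots_multiset_prod_X_sub_C] at this
  exact this.symm


lemma sum_f_multiset {n : Type*} [Fintype n] (e d : n → ℝ)
    (h : Finset.univ.val.map e = Finset.univ.val.map d) (f : ℝ → ℝ) :
    ∑ i, f (e i) = ∑ i, f (d i) := by
  rw [Finset.sum_eq_multiset_sum, Finset.sum_eq_multiset_sum]
  have h2 : ∀ g : n → ℝ, Finset.univ.val.map (fun i => f (g i)) =
      (Finset.univ.val.map g).map f := by
    intro g; rw [Multiset.map_map]; rfl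
  rw [h2, h2, h]

lemma pucci_diagonal (lam Lam : ℝ) {n : Type*} [Fintype n] [DecidableEq n] (d : n → ℝ) :
    pucci lam Lam (Matrix.diagonal d) = ∑ i, (Lam * max (d i) 0 + lam * min (d i) 0) := by
  rw [pucci, dif_pos (Matrix.isHermitian_diagonal d)]
  exact sum_f_multiset _ d (eig_multiset d _) (fun e => Lam * max e 0 + lam * min e 0)

section derivs

variable (γ α s : ℝ)

lemma inner_deriv_s7 (hs : s ≠ 0) (b : ℝ) : HasDerivAt (fun p : ℝ => (p - α) / s) (1 / s) b := by
  simpa using ((hasDerivAt_id b).sub_const α).div_const s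

lemma d1u (hs : s ≠ 0) :
    d1 (fun x y z => γ * Real.cos x - γ * s * Real.sin ((y - α) / s) -
      s * Real.sin ((z - α) / s)) =
    fun x _ _ => -(γ * Real.sin x) := by
  funext a b c
  have H : HasDerivAt (fun p => γ * Real.cos p - γ * s * Real.sin ((b - α) / s) -
      s * Real.sin ((c - α) / s)) (-(γ * Real.sin a)) a := by
    have := (((Real.hasDerivAt_cos a).const_mul γ).sub_const
      (γ * s * Real.sin ((b - α) / s))).sub_const (s * Real.sin ((c - α) / s))
    exact this.congr_deriv (by ring)
  exact H.deriv

lemma d2u (hs : s ≠ 0) :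
    d2 (fun x y z => γ * Real.cos x - γ * s * Real.sin ((y - α) / s) -
      s * Real.sin ((z - α) / s)) =
    fun _ y _ => -(γ * Real.cos ((y - α) / s)) := by
  funext a b c
  have hsin : HasDerivAt (fun p : ℝ => Real.sin ((p - α) / s))
      (Real.cos ((b - α) / s) * (1 / s)) b :=
    by have := (Real.hasDerivAt_sin ((b - α) / s)).comp b (inner_deriv_s7 α s hs b); exact this
  have H : HasDerivAt (fun p => γ * Real.cos a - γ * s * Real.sin ((p - α) / s) -
      s * Real.sin ((c - α) / s)) (-(γ * Real.cos ((b - α) / s))) b := by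
    have := ((hsin.const_mul (γ * s)).const_sub (γ * Real.cos a)).sub_const
      (s * Real.sin ((c - α) / s))
    exact this.congr_deriv (by field_simp)
  exact H.deriv

lemma d3u (hs : s ≠ 0) :
    d3 (fun x y z => γ * Real.cos x - γ * s * Real.sin ((y - α) / s) -
      s * Real.sin ((z - α) / s)) =
    fun _ _ z => -Real.cos ((z - α) / s) := by
  funext a b c
  have hsin : HasDerivAt (fun p : ℝ => Real.sin ((p - α) / s))
      (Real.cos ((c - α) / s) * (1 / s)) c :=
    by have := (Real.hasDerivAt_sin ((c - α) / s)).comp c (inner_deriv_s7 α s hs c); exact this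
  have H : HasDerivAt (fun p => γ * Real.cos a - γ * s * Real.sin ((b - α) / s) -
      s * Real.sin ((p - α) / s)) (-Real.cos ((c - α) / s)) c := by
    have := (hsin.const_mul s).const_sub (γ * Real.cos a - γ * s * Real.sin ((b - α) / s))
    exact this.congr_deriv (by field_simp)
  exact H.deriv

lemma hess_u (hs : s ≠ 0) (x y z : ℝ) :
    hess3 (fun x y z => γ * Real.cos x - γ * s * Real.sin ((y - α) / s) -
      s * Real.sin ((z - α) / s)) x y z =
    Matrix.diagonal ![-(γ * Real.cos x), γ * Real.sin ((y - α) / s) / s,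
      Real.sin ((z - α) / s) / s] := by
  rw [hess3, d1u γ α s hs, d2u γ α s hs, d3u γ α s hs]
  have z12 : d2 (fun x _ _ => -(γ * Real.sin x)) x y z = 0 := by simp [d2]
  have z13 : d3 (fun x _ _ => -(γ * Real.sin x)) x y z = 0 := by simp [d3]
  have z21 : d1 (fun (_ y _ : ℝ) => -(γ * Real.cos ((y - α) / s))) x y z = 0 := by simp [d1]
  have z23 : d3 (fun (_ y _ : ℝ) => -(γ * Real.cos ((y - α) / s))) x y z = 0 := by simp [d3]
  have z31 : d1 (fun (_ _ z : ℝ) => -Real.cos ((z - α) / s)) x y z = 0 := by simp [d1]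
  have z32 : d2 (fun (_ _ z : ℝ) => -Real.cos ((z - α) / s)) x y z = 0 := by simp [d2]
  have e11 : d1 (fun x _ _ => -(γ * Real.sin x)) x y z = -(γ * Real.cos x) := by
    have H : HasDerivAt (fun p : ℝ => -(γ * Real.sin p)) (-(γ * Real.cos x)) x := by
      exact ((Real.hasDerivAt_sin x).const_mul γ).neg
    exact H.deriv
  have e22 : d2 (fun (_ y _ : ℝ) => -(γ * Real.cos ((y - α) / s))) x y z =
      γ * Real.sin ((y - α) / s) / s := by
    have H : HasDerivAt (fun p : ℝ => -(γ * Real.cos ((p - α) / s)))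
        (γ * Real.sin ((y - α) / s) / s) y := by
      have hcos : HasDerivAt (fun p : ℝ => Real.cos ((p - α) / s))
          (-Real.sin ((y - α) / s) * (1 / s)) y :=
        by have := (Real.hasDerivAt_cos ((y - α) / s)).comp y (inner_deriv_s7 α s hs y); exact this
      have := (hcos.const_mul γ).neg
      exact this.congr_deriv (by field_simp)
    exact H.deriv
  have e33 : d3 (fun (_ _ z : ℝ) => -Real.cos ((z - α) / s)) x y z =
      Real.sin ((z - α) / s) / s := by
    have H : HasDerivAt (fun p : ℝ => -Real.cos ((p - α) / s))
        (Real.sin ((z - α) / s) / s) z := by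
      have hcos : HasDerivAt (fun p : ℝ => Real.cos ((p - α) / s))
          (-Real.sin ((z - α) / s) * (1 / s)) z :=
        by have := (Real.hasDerivAt_cos ((z - α) / s)).comp z (inner_deriv_s7 α s hs z); exact this
      have := hcos.neg
      exact this.congr_deriv (by field_simp)
    exact H.deriv
  rw [e11, e22, e33, z12, z13, z21, z23, z31, z32]
  ext i j
  fin_cases i <;> fin_cases j <;> simp [Matrix.diagonal, Matrix.vecHead, Matrix.vecTail]

end derivs

/-- The YZ-bridge: `u_{YZ}(x,y,z) = γ cos x − γ√ω·sin r − √ω·sin t`, with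
`r = (y−α)/√ω`, `t = (z−α)/√ω`, satisfies `−M⁺(Hess u_{YZ}) = λ·u_{YZ}` on the
bridge, is positive inside and vanishes on the outer boundary. -/
theorem yz_bridge_eigen (lam Lam γ : ℝ) (hlam : 0 < lam) (hLam : lam ≤ Lam)
    (hγ : 0 < γ) (ω α : ℝ) (hω : ω = Lam / lam) (hα : α = Real.pi / 2)
    (x y z r t : ℝ) (hr : r = (y - α) / Real.sqrt ω) (ht : t = (z - α) / Real.sqrt ω)
    (hr' : 0 ≤ r ∧ r ≤ Real.pi / 2) (ht' : 0 ≤ t ∧ t ≤ Real.pi / 2)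
    (harg : Real.sqrt ω * Real.sin r + Real.sqrt ω / γ * Real.sin t ≤ 1)
    (hx : 0 ≤ x ∧
      x ≤ Real.arccos (Real.sqrt ω * Real.sin r + Real.sqrt ω / γ * Real.sin t)) :
    (-pucci lam Lam
        (hess3 (fun x y z =>
          γ * Real.cos x - γ * Real.sqrt ω * Real.sin ((y - α) / Real.sqrt ω) -
            Real.sqrt ω * Real.sin ((z - α) / Real.sqrt ω)) x y z) =
      lam * (γ * Real.cos x - γ * Real.sqrt ω * Real.sin r -
        Real.sqrt ω * Real.sin t)) ∧
    (x < Real.arccos (Real.sqrt ω * Real.sin r + Real.sqrt ω / γ * Real.sin t) →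
      0 < γ * Real.cos x - γ * Real.sqrt ω * Real.sin r -
        Real.sqrt ω * Real.sin t) ∧
    (x = Real.arccos (Real.sqrt ω * Real.sin r + Real.sqrt ω / γ * Real.sin t) →
      γ * Real.cos x - γ * Real.sqrt ω * Real.sin r -
        Real.sqrt ω * Real.sin t = 0) := by
  obtain ⟨hr0, hr1⟩ := hr'
  obtain ⟨ht0, ht1⟩ := ht'
  obtain ⟨hx0, hx1⟩ := hx
  have hpi := Real.pi_pos
  set s := Real.sqrt ω with hsdef
  have hω0 : 0 < ω := hω ▸ div_pos (hlam.trans_le hLam) hlam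
  have hs0 : 0 < s := Real.sqrt_pos.mpr hω0
  have hs2 : s ^ 2 = ω := Real.sq_sqrt hω0.le
  have hLamEq : Lam = lam * ω := by rw [hω]; field_simp
  have hsinr : 0 ≤ Real.sin r := Real.sin_nonneg_of_nonneg_of_le_pi hr0 (by linarith)
  have hsint : 0 ≤ Real.sin t := Real.sin_nonneg_of_nonneg_of_le_pi ht0 (by linarith)
  set A := s * Real.sin r + s / γ * Real.sin t with hA
  have hA0 : 0 ≤ A := by
    apply add_nonneg (mul_nonneg hs0.le hsinr)
    exact mul_nonneg (by positivity) hsint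
  have hA1 : A ≤ 1 := harg
  have hxle : x ≤ Real.pi / 2 := hx1.trans (Real.arccos_le_pi_div_two.mpr hA0)
  have hcosx : 0 ≤ Real.cos x := Real.cos_nonneg_of_mem_Icc ⟨by linarith, hxle⟩
  have hgA : γ * A = γ * s * Real.sin r + s * Real.sin t := by
    rw [hA]; field_simp
  refine ⟨?_, ?_, ?_⟩
  · rw [hess_u γ α s hs0.ne', pucci_diagonal, Fin.sum_univ_three]
    simp only [Matrix.cons_val_zero, Matrix.cons_val_one, Matrix.head_cons,
      Matrix.cons_val_two, Matrix.tail_cons]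
    rw [← hr, ← ht]
    have ha : -(γ * Real.cos x) ≤ 0 := by nlinarith
    have hb : 0 ≤ γ * Real.sin r / s := div_nonneg (mul_nonneg hγ.le hsinr) hs0.le
    have hc : 0 ≤ Real.sin t / s := div_nonneg hsint hs0.le
    rw [max_eq_right ha, min_eq_left ha, max_eq_left hb, min_eq_right hb,
      max_eq_left hc, min_eq_right hc]
    rw [hLamEq, ← hs2]
    field_simp
    ring
  · intro h
    have hlt := Real.cos_lt_cos_of_nonneg_of_le_pi hx0 (Real.arccos_le_pi A) h
    rw [Real.cos_arccos (by linarith) hA1] at hlt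
    nlinarith
  · intro h
    rw [h, Real.cos_arccos (by linarith) hA1]
    linarith
end
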